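/- arXiv:1312.4820 — 2 statements merged into one kernel-verified Lean document; each statement's English description precedes it below -/
import Mathlib

section
/- Let ρ, J_u, η, A > 0 and 0 < α < 1, and for ω > 0 let N(ω) = J_u − i/(η ω) + A Γ(1+α) ω^{−α} (cos(πα/2) − i sin(πα/2)) be the Andrade complex compliance, and let ζ(ω) = ω √( ρ ( |N(ω)| − Re N(ω) ) / 2 ) be the attenuation. Then ζ(ω) → 0 as ω → 0⁺, and ζ(ω) → +∞ as ω → +∞. -/
/-!
Write `N = a - i b`. Since `(‖N‖ - a)(‖N‖ + a) = b²`, the attenuation `ζ = ω √(ρ (‖N‖ - a) / 2)`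
is controlled by `ω b`. For `a ≥ 0` we have `‖N‖ - a ≤ |b|`, so `ζ² ≤ ρ |ω² b| / 2`, and for the
Andrade compliance `ω² b = ω / η + A Γ(1+α) sin(πα/2) ω^(2-α) → 0` as `ω → 0⁺`.
As `ω → ∞`, `N(ω) → J_u`, so `‖N‖ + a ≤ M` eventually and `ζ ≥ √(ρ / 2M) |ω b|`, where
`ω b = 1 / η + A Γ(1+α) sin(πα/2) ω^(1-α) → ∞` because `α < 1`.
-/

open Filter Topology

namespace Complex

theorem norm_sub_re_le_abs_im {z : ℂ} (hz : 0 ≤ z.re) : ‖z‖ - z.re ≤ |z.im| := by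
  linarith [norm_le_abs_re_add_abs_im z, abs_of_nonneg hz]

theorem sq_im_le_norm_sub_re_mul {z : ℂ} {M : ℝ} (hM : ‖z‖ + z.re ≤ M) :
    z.im ^ 2 ≤ (‖z‖ - z.re) * M := by
  calc z.im ^ 2 = (‖z‖ - z.re) * (‖z‖ + z.re) := by rw [← sq_norm_sub_sq_re]; ring
    _ ≤ (‖z‖ - z.re) * M := by
      gcongr
      linarith [re_le_norm z]

end Complex

noncomputable def attenuation (ρ ω : ℝ) (z : ℂ) : ℝ :=
  ω * √(ρ * (‖z‖ - z.re) / 2)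

section attenuation

variable {ρ ω : ℝ} {z : ℂ}

theorem attenuation_nonneg (hω : 0 ≤ ω) : 0 ≤ attenuation ρ ω z := by
  unfold attenuation; positivity

theorem attenuation_eq_sqrt (hω : 0 ≤ ω) :
    attenuation ρ ω z = √(ρ * (ω ^ 2 * (‖z‖ - z.re)) / 2) := by
  rw [attenuation, ← Real.sqrt_sq hω, ← Real.sqrt_mul (sq_nonneg ω), Real.sqrt_sq hω]
  ring_nf

theorem attenuation_le (hρ : 0 ≤ ρ) (hω : 0 ≤ ω) (hz : 0 ≤ z.re) :
    attenuation ρ ω z ≤ √(ρ * |ω ^ 2 * z.im| / 2) := by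
  rw [attenuation_eq_sqrt hω, abs_mul, abs_of_nonneg (sq_nonneg ω)]
  gcongr
  exact Complex.norm_sub_re_le_abs_im hz

theorem le_attenuation {M : ℝ} (hρ : 0 ≤ ρ) (hω : 0 ≤ ω) (hM : 0 < M) (hz : ‖z‖ + z.re ≤ M) :
    √(ρ / (2 * M)) * |ω * z.im| ≤ attenuation ρ ω z := by
  rw [attenuation_eq_sqrt hω, ← Real.sqrt_sq_eq_abs, ← Real.sqrt_mul (by positivity)]
  refine Real.sqrt_le_sqrt ?_
  rw [div_mul_eq_mul_div, div_le_div_iff₀ (by positivity) two_pos, mul_pow]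
  have := mul_le_mul_of_nonneg_left (Complex.sq_im_le_norm_sub_re_mul hz)
    (mul_nonneg hρ (sq_nonneg ω))
  linarith

variable {l : Filter ℝ} {z : ℝ → ℂ}

theorem tendsto_attenuation_zero (hρ : 0 ≤ ρ) (hω : ∀ᶠ ω in l, 0 ≤ ω)
    (hre : ∀ᶠ ω in l, 0 ≤ (z ω).re) (him : Tendsto (fun ω ↦ ω ^ 2 * (z ω).im) l (𝓝 0)) :
    Tendsto (fun ω ↦ attenuation ρ ω (z ω)) l (𝓝 0) := by
  have hbound : Tendsto (fun ω ↦ √(ρ * |ω ^ 2 * (z ω).im| / 2)) l (𝓝 0) := by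
    simpa using ((him.abs.const_mul ρ).div_const 2).sqrt
  refine tendsto_of_tendsto_of_tendsto_of_le_of_le' tendsto_const_nhds hbound ?_ ?_
  · exact hω.mono fun ω hω ↦ attenuation_nonneg hω
  · filter_upwards [hω, hre] with ω hω hre using attenuation_le hρ hω hre

theorem tendsto_attenuation_atTop (hρ : 0 < ρ) (hω : ∀ᶠ ω in l, 0 ≤ ω)
    (hbdd : IsBoundedUnder (· ≤ ·) l fun ω ↦ ‖z ω‖ + (z ω).re)
    (him : Tendsto (fun ω ↦ |ω * (z ω).im|) l atTop) :
    Tendsto (fun ω ↦ attenuation ρ ω (z ω)) l atTop := by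
  obtain ⟨M, hM⟩ := hbdd
  have hM1 : 0 < max M 1 := by positivity
  refine tendsto_atTop_mono' l ?_ (him.const_mul_atTop (Real.sqrt_pos.2 (by positivity :
    0 < ρ / (2 * max M 1))))
  filter_upwards [hω, eventually_map.1 hM] with ω hω hM
  exact le_attenuation hρ.le hω hM1 (hM.trans (le_max_left _ _))

end attenuation

noncomputable def andradeCompliance (Ju η A α ω : ℝ) : ℂ :=
  (Ju : ℂ) - Complex.I / ((η : ℂ) * (ω : ℂ))
    + ((A * Real.Gamma (1 + α) * ω ^ (-α) : ℝ) : ℂ)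
      * ((Real.cos (Real.pi * α / 2) : ℂ) - Complex.I * (Real.sin (Real.pi * α / 2) : ℂ))

section andrade

variable {Ju η A α : ℝ}

theorem andradeCompliance_re (ω : ℝ) :
    (andradeCompliance Ju η A α ω).re
      = Ju + A * Real.Gamma (1 + α) * Real.cos (Real.pi * α / 2) * ω ^ (-α) := by
  rw [andradeCompliance, ← Complex.ofReal_mul, Complex.add_re, Complex.sub_re,
    Complex.div_ofReal_re, Complex.re_ofReal_mul]
  simp only [Complex.ofReal_re, Complex.I_re, zero_div, sub_zero, Complex.sub_re, Complex.mul_re,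
    zero_mul, Complex.I_im, Complex.ofReal_im, mul_zero, sub_self]
  ring

theorem andradeCompliance_im (ω : ℝ) :
    (andradeCompliance Ju η A α ω).im
      = -((η * ω)⁻¹ + A * Real.Gamma (1 + α) * Real.sin (Real.pi * α / 2) * ω ^ (-α)) := by
  rw [andradeCompliance, ← Complex.ofReal_mul, Complex.add_im, Complex.sub_im,
    Complex.div_ofReal_im, Complex.im_ofReal_mul]
  simp only [Complex.ofReal_im, Complex.I_im, zero_sub, Complex.sub_im, Complex.mul_im,
    Complex.I_re, mul_zero, Complex.ofReal_re, one_mul, zero_add]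
  ring

theorem andradeCompliance_re_nonneg (hJ : 0 ≤ Ju) (hA : 0 ≤ A) (hα0 : 0 ≤ α) (hα1 : α ≤ 1)
    {ω : ℝ} (hω : 0 ≤ ω) : 0 ≤ (andradeCompliance Ju η A α ω).re := by
  have hΓ : 0 ≤ Real.Gamma (1 + α) := Real.Gamma_nonneg_of_nonneg (by linarith)
  have hcos : 0 ≤ Real.cos (Real.pi * α / 2) :=
    Real.cos_nonneg_of_mem_Icc ⟨by nlinarith [Real.pi_pos], by nlinarith [Real.pi_pos]⟩
  rw [andradeCompliance_re]
  have := Real.rpow_nonneg hω (-α)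
  positivity

theorem tendsto_sq_mul_andradeCompliance_im_nhdsGT_zero (hα : α < 2) :
    Tendsto (fun ω ↦ ω ^ 2 * (andradeCompliance Ju η A α ω).im) (𝓝[>] 0) (𝓝 0) := by
  set C := A * Real.Gamma (1 + α) * Real.sin (Real.pi * α / 2) with hC
  have hcont : ContinuousAt (fun ω : ℝ ↦ -(ω / η + C * ω ^ (2 - α))) 0 := by
    fun_prop (disch := linarith)
  have hlim : Tendsto (fun ω : ℝ ↦ -(ω / η + C * ω ^ (2 - α))) (𝓝[>] 0) (𝓝 0) := by
    simpa [Real.zero_rpow (by linarith : 2 - α ≠ 0)]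
      using hcont.tendsto.mono_left nhdsWithin_le_nhds
  refine hlim.congr' (eventually_mem_nhdsWithin.mono fun ω (hω : 0 < ω) ↦ ?_)
  beta_reduce
  rw [andradeCompliance_im, show (2 - α) = 2 + -α by ring, Real.rpow_add hω, Real.rpow_two, hC]
  field_simp

theorem tendsto_andradeCompliance_atTop (hα : 0 < α) :
    Tendsto (andradeCompliance Ju η A α) atTop (𝓝 Ju) := by
  have hofReal := Complex.continuous_ofReal.tendsto 0
  have hviscous : Tendsto (fun ω : ℝ ↦ η⁻¹ * ω⁻¹) atTop (𝓝 0) := by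
    simpa using tendsto_inv_atTop_zero.const_mul η⁻¹
  have hcreep : Tendsto (fun ω : ℝ ↦ A * Real.Gamma (1 + α) * ω ^ (-α)) atTop (𝓝 0) := by
    simpa using (tendsto_rpow_neg_atTop hα).const_mul (A * Real.Gamma (1 + α))
  have hlim := (tendsto_const_nhds (x := (Ju : ℂ))).sub
    ((hofReal.comp hviscous).const_mul Complex.I) |>.add
    ((hofReal.comp hcreep).mul_const
      ((Real.cos (Real.pi * α / 2) : ℂ) - Complex.I * (Real.sin (Real.pi * α / 2) : ℂ)))
  simp only [Complex.ofReal_zero, mul_zero, zero_mul, sub_zero, add_zero] at hlim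
  refine hlim.congr fun ω ↦ ?_
  simp only [Function.comp_apply, andradeCompliance, div_eq_mul_inv, mul_inv]
  push_cast
  ring

theorem tendsto_abs_mul_andradeCompliance_im_atTop (hA : 0 < A) (hα0 : 0 < α) (hα1 : α < 1) :
    Tendsto (fun ω ↦ |ω * (andradeCompliance Ju η A α ω).im|) atTop atTop := by
  have hΓ : 0 < Real.Gamma (1 + α) := Real.Gamma_pos_of_pos (by linarith)
  have hsin : 0 < Real.sin (Real.pi * α / 2) :=
    Real.sin_pos_of_pos_of_lt_pi (by positivity) (by nlinarith [Real.pi_pos])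
  have hlim : Tendsto (fun ω : ℝ ↦ η⁻¹ + A * Real.Gamma (1 + α) * Real.sin (Real.pi * α / 2)
      * ω ^ (1 - α)) atTop atTop :=
    tendsto_atTop_add_const_left _ _
      ((tendsto_rpow_atTop (by linarith)).const_mul_atTop (by positivity))
  refine (tendsto_abs_atTop_atTop.comp hlim).congr' ?_
  filter_upwards [eventually_gt_atTop 0] with ω hω
  rw [Function.comp_apply, andradeCompliance_im, mul_neg, abs_neg,
    show (1 - α) = 1 + -α by ring, Real.rpow_add hω, Real.rpow_one]
  field_simp

end andrade

theorem stmt_12_general (ρ Ju η A α : ℝ) (hρ : 0 < ρ) (hJ : 0 < Ju) (hA : 0 < A)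
    (hα0 : 0 < α) (hα1 : α < 1) (N : ℝ → ℂ) (ζ : ℝ → ℝ)
    (hN : ∀ ω : ℝ, 0 < ω → N ω =
      (Ju : ℂ) - Complex.I / ((η : ℂ) * (ω : ℂ))
        + ((A * Real.Gamma (1 + α) * ω ^ (-α) : ℝ) : ℂ)
          * ((Real.cos (Real.pi * α / 2) : ℂ) - Complex.I * (Real.sin (Real.pi * α / 2) : ℂ)))
    (hζ : ∀ ω : ℝ, 0 < ω →
      ζ ω = ω * Real.sqrt (ρ * (‖N ω‖ - (N ω).re) / 2)) :
    Tendsto ζ (nhdsWithin 0 (Set.Ioi 0)) (nhds 0) ∧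
    Tendsto ζ atTop atTop := by
  have hζN : ∀ ω, 0 < ω → attenuation ρ ω (andradeCompliance Ju η A α ω) = ζ ω := fun ω hω ↦ by
    rw [hζ ω hω, hN ω hω]
    rfl
  constructor
  · have hpos : ∀ᶠ ω in 𝓝[>] (0 : ℝ), 0 < ω := self_mem_nhdsWithin
    refine (tendsto_attenuation_zero hρ.le (hpos.mono fun _ ↦ le_of_lt)
      (hpos.mono fun ω hω ↦ andradeCompliance_re_nonneg hJ.le hA.le hα0.le hα1.le hω.le)
      (tendsto_sq_mul_andradeCompliance_im_nhdsGT_zero (by linarith))).congr' (hpos.mono hζN)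
  · have hpos : ∀ᶠ ω in atTop, (0 : ℝ) < ω := eventually_gt_atTop 0
    have hlim := tendsto_andradeCompliance_atTop (Ju := Ju) (η := η) (A := A) hα0
    refine (tendsto_attenuation_atTop hρ (hpos.mono fun _ ↦ le_of_lt)
      (hlim.norm.add ((Complex.continuous_re.tendsto _).comp hlim)).isBoundedUnder_le
      (tendsto_abs_mul_andradeCompliance_im_atTop hA hα0 hα1)).congr' (hpos.mono hζN)

theorem stmt_12 (ρ Ju η A α : ℝ) (hρ : 0 < ρ) (hJ : 0 < Ju) (hη : 0 < η) (hA : 0 < A)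
    (hα0 : 0 < α) (hα1 : α < 1) (N : ℝ → ℂ) (ζ : ℝ → ℝ)
    (hN : ∀ ω : ℝ, 0 < ω → N ω =
      (Ju : ℂ) - Complex.I / ((η : ℂ) * (ω : ℂ))
        + ((A * Real.Gamma (1 + α) * ω ^ (-α) : ℝ) : ℂ)
          * ((Real.cos (Real.pi * α / 2) : ℂ) - Complex.I * (Real.sin (Real.pi * α / 2) : ℂ)))
    (hζ : ∀ ω : ℝ, 0 < ω →
      ζ ω = ω * Real.sqrt (ρ * (‖N ω‖ - (N ω).re) / 2)) :
    Tendsto ζ (nhdsWithin 0 (Set.Ioi 0)) (nhds 0) ∧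
    Tendsto ζ atTop atTop :=
  stmt_12_general ρ Ju η A α hρ hJ hA hα0 hα1 N ζ hN hζ
end

section
/- Let ρ, J_u, η, A > 0, 0 < α < 1, L ≥ 1, and θ_ℓ > 0, μ_ℓ > 0 for ℓ = 1, …, L. For ω > 0 define the Andrade–DA complex compliance Ñ(ω) = J_u − i/(η ω) + A Γ(1+α) (2 sin(πα)/π) ∑_{ℓ=1}^L μ_ℓ θ_ℓ^{1−2α} / (θ_ℓ² + iω), and the phase velocity c̃(ω) = √( 2 / ( ρ ( |Ñ(ω)| + Re Ñ(ω) ) ) ). Then c̃(ω) → 0 as ω → 0⁺ and c̃(ω) → 1/√(ρ J_u) as ω → +∞; in particular the low- and high-frequency phase velocity limits of the Andrade–DA model coincide with those of the original Andrade model. -/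
/-!
As `ω → 0⁺` the viscous term `-i/(ηω)` dominates: the diffusive sum is continuous at `0`
(every `θ_ℓ ≠ 0`), so `Re Ñ` converges while `-Im Ñ → ∞`, whence `|Ñ| + Re Ñ ≥ -Im Ñ + Re Ñ → ∞`
and `c̃ → 0`. As `ω → ∞` the viscous term and every term of the sum decay like `1/ω`, so
`Ñ → J_u`; the phase velocity is continuous at the positive real `J_u`, where it equals `1/√(ρ J_u)`.
-/

open Complex Filter Topology

noncomputable def phaseVelocity (ρ : ℝ) (z : ℂ) : ℝ :=
  √(2 / (ρ * (‖z‖ + z.re)))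

lemma phaseVelocity_ofReal (ρ : ℝ) {J : ℝ} (hJ : 0 ≤ J) : phaseVelocity ρ J = 1 / √(ρ * J) := by
  rw [phaseVelocity, norm_real, Real.norm_of_nonneg hJ, ofReal_re, one_div, ← Real.sqrt_inv]
  congr 1
  field_simp
  ring

lemma continuousAt_phaseVelocity {ρ : ℝ} (hρ : ρ ≠ 0) {z : ℂ} (hz : ‖z‖ + z.re ≠ 0) :
    ContinuousAt (phaseVelocity ρ) z := by
  unfold phaseVelocity
  fun_prop (disch := positivity)

lemma tendsto_phaseVelocity_zero {α : Type*} {l : Filter α} {ρ : ℝ} (hρ : 0 < ρ) {N : α → ℂ}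
    (h : Tendsto (fun x => ‖N x‖ + (N x).re) l atTop) :
    Tendsto (fun x => phaseVelocity ρ (N x)) l (𝓝 0) := by
  have h := (Real.continuous_sqrt.tendsto 0).comp
    (tendsto_const_nhds.div_atTop (h.const_mul_atTop hρ) : Tendsto (fun x => 2 / (ρ * _)) l (𝓝 0))
  rwa [Real.sqrt_zero] at h

lemma tendsto_norm_add_re_atTop {α : Type*} {l : Filter α} {N : α → ℂ} {r : ℝ}
    (hre : Tendsto (fun x => (N x).re) l (𝓝 r)) (him : Tendsto (fun x => -(N x).im) l atTop) :
    Tendsto (fun x => ‖N x‖ + (N x).re) l atTop :=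
  tendsto_atTop_mono (fun x => by gcongr; exact (neg_le_abs _).trans (abs_im_le_norm _))
    (him.atTop_add hre)

lemma abs_le_norm_ofReal_add_I_mul (a ω : ℝ) : |ω| ≤ ‖(a : ℂ) + I * ω‖ := by
  simpa using abs_im_le_norm ((a : ℂ) + I * ω)

lemma I_div_ofReal_mul_ofReal (a b : ℝ) :
    I / ((a : ℂ) * (b : ℂ)) = (((a * b)⁻¹ : ℝ) : ℂ) * I := by
  push_cast
  ring

section AndradeDA

variable {ι : Type*} [Fintype ι]

noncomputable def diffusiveSum (θ w : ι → ℝ) (ω : ℝ) : ℂ :=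
  ∑ ℓ, ((w ℓ : ℝ) : ℂ) / (((θ ℓ ^ 2 : ℝ) : ℂ) + I * (ω : ℂ))

lemma continuous_diffusiveSum {θ : ι → ℝ} (hθ : ∀ ℓ, θ ℓ ≠ 0) (w : ι → ℝ) :
    Continuous (diffusiveSum θ w) := by
  refine continuous_finsetSum _ fun ℓ _ => continuous_const.div (by fun_prop) fun ω h => ?_
  exact hθ ℓ (by simpa [-ofReal_pow] using congrArg re h)

lemma tendsto_diffusiveSum_atTop (θ w : ι → ℝ) :
    Tendsto (diffusiveSum θ w) atTop (𝓝 0) := by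
  rw [show (0 : ℂ) = ∑ _ : ι, 0 by simp]
  refine tendsto_finsetSum _ fun ℓ _ => ?_
  rw [tendsto_zero_iff_norm_tendsto_zero]
  refine squeeze_zero' (Eventually.of_forall fun ω => norm_nonneg _) ?_
    (tendsto_const_nhds.div_atTop tendsto_id : Tendsto (fun ω : ℝ => |w ℓ| / ω) atTop (𝓝 0))
  filter_upwards [eventually_gt_atTop 0] with ω hω
  rw [norm_div, norm_real, Real.norm_eq_abs]
  gcongr
  simpa only [abs_of_pos hω] using abs_le_norm_ofReal_add_I_mul (θ ℓ ^ 2) ω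

/-- `K` stands for `A Γ(1+α) (2 sin(πα)/π)` and `w ℓ` for `μ_ℓ θ_ℓ^(1-2α)`. -/
noncomputable def andradeDACompliance (Ju η K : ℝ) (θ w : ι → ℝ) (ω : ℝ) : ℂ :=
  (Ju : ℂ) - I / ((η : ℂ) * (ω : ℂ)) + (K : ℂ) * diffusiveSum θ w ω

variable (Ju η K : ℝ) (θ w : ι → ℝ)

lemma re_andradeDACompliance (ω : ℝ) :
    (andradeDACompliance Ju η K θ w ω).re = (Ju + K * diffusiveSum θ w ω).re := by
  simp [andradeDACompliance, I_div_ofReal_mul_ofReal]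

lemma neg_im_andradeDACompliance (ω : ℝ) :
    -(andradeDACompliance Ju η K θ w ω).im = (η * ω)⁻¹ - (Ju + K * diffusiveSum θ w ω).im := by
  simp [andradeDACompliance, I_div_ofReal_mul_ofReal]
  ring

lemma tendsto_andradeDACompliance_atTop :
    Tendsto (andradeDACompliance Ju η K θ w) atTop (𝓝 Ju) := by
  have hvisc : Tendsto (fun ω : ℝ => I / ((η : ℂ) * (ω : ℂ))) atTop (𝓝 0) := by
    simp_rw [I_div_ofReal_mul_ofReal, mul_inv]
    simpa using ((tendsto_inv_atTop_zero.const_mul η⁻¹).ofReal.mul_const I :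
      Tendsto (fun ω : ℝ => ((η⁻¹ * ω⁻¹ : ℝ) : ℂ) * I) atTop _)
  have h := ((tendsto_const_nhds (x := (Ju : ℂ))).sub hvisc).add
    ((tendsto_diffusiveSum_atTop θ w).const_mul (K : ℂ))
  rwa [sub_zero, mul_zero, add_zero] at h

variable {η θ} in
lemma tendsto_norm_add_re_andradeDACompliance_nhdsGT_zero (hη : 0 < η) (hθ : ∀ ℓ, θ ℓ ≠ 0) :
    Tendsto (fun ω => ‖andradeDACompliance Ju η K θ w ω‖ + (andradeDACompliance Ju η K θ w ω).re)
      (𝓝[>] 0) atTop := by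
  have hM : Tendsto (fun ω => Ju + K * diffusiveSum θ w ω) (𝓝[>] 0)
      (𝓝 (Ju + K * diffusiveSum θ w 0)) :=
    ((continuous_diffusiveSum hθ w).const_mul _ |>.const_add _).continuousWithinAt.tendsto
  refine tendsto_norm_add_re_atTop (r := (Ju + K * diffusiveSum θ w 0 : ℂ).re) ?_ ?_
  · simp_rw [re_andradeDACompliance]
    exact (continuous_re.tendsto _).comp hM
  · simp_rw [neg_im_andradeDACompliance, sub_eq_add_neg, mul_inv]
    exact (tendsto_inv_nhdsGT_zero.const_mul_atTop (inv_pos.2 hη)).atTop_add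
      ((continuous_im.tendsto _).comp hM).neg

end AndradeDA

theorem stmt_16_general (ρ Ju η A α : ℝ) (hρ : 0 < ρ) (hJ : 0 < Ju) (hη : 0 < η)
    (L : ℕ)
    (θ μ : Fin L → ℝ) (hθ : ∀ ℓ, 0 < θ ℓ)
    (N : ℝ → ℂ) (c : ℝ → ℝ)
    (hN : ∀ ω : ℝ, 0 < ω → N ω =
      (Ju : ℂ) - Complex.I / ((η : ℂ) * (ω : ℂ))
        + ((A * Real.Gamma (1 + α) * (2 * Real.sin (Real.pi * α) / Real.pi) : ℝ) : ℂ)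
          * ∑ ℓ : Fin L, ((μ ℓ * θ ℓ ^ (1 - 2 * α) : ℝ) : ℂ)
              / (((θ ℓ ^ 2 : ℝ) : ℂ) + Complex.I * (ω : ℂ)))
    (hc : ∀ ω : ℝ, 0 < ω →
      c ω = Real.sqrt (2 / (ρ * (‖N ω‖ + (N ω).re)))) :
    Tendsto c (nhdsWithin 0 (Set.Ioi 0)) (nhds 0) ∧
    Tendsto c atTop (nhds (1 / Real.sqrt (ρ * Ju))) := by
  set K := A * Real.Gamma (1 + α) * (2 * Real.sin (Real.pi * α) / Real.pi)
  set w : Fin L → ℝ := fun ℓ => μ ℓ * θ ℓ ^ (1 - 2 * α)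
  have hc_eq : ∀ ω, 0 < ω → phaseVelocity ρ (andradeDACompliance Ju η K θ w ω) = c ω :=
    fun ω hω => by rw [hc ω hω, hN ω hω]; rfl
  constructor
  · exact (tendsto_phaseVelocity_zero hρ (tendsto_norm_add_re_andradeDACompliance_nhdsGT_zero
      Ju K w hη fun ℓ => (hθ ℓ).ne')).congr' (eventually_nhdsWithin_of_forall hc_eq)
  · have hJu : ‖(Ju : ℂ)‖ + (Ju : ℂ).re ≠ 0 := by
      rw [norm_real, Real.norm_of_nonneg hJ.le, ofReal_re]
      positivity
    have h := (continuousAt_phaseVelocity hρ.ne' hJu).tendsto.comp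
      (tendsto_andradeDACompliance_atTop Ju η K θ w)
    rw [phaseVelocity_ofReal ρ hJ.le] at h
    exact h.congr' ((eventually_gt_atTop 0).mono hc_eq)

theorem stmt_16 (ρ Ju η A α : ℝ) (hρ : 0 < ρ) (hJ : 0 < Ju) (hη : 0 < η) (hA : 0 < A)
    (hα0 : 0 < α) (hα1 : α < 1) (L : ℕ) (hL : 1 ≤ L)
    (θ μ : Fin L → ℝ) (hθ : ∀ ℓ, 0 < θ ℓ) (hμ : ∀ ℓ, 0 < μ ℓ)
    (N : ℝ → ℂ) (c : ℝ → ℝ)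
    (hN : ∀ ω : ℝ, 0 < ω → N ω =
      (Ju : ℂ) - Complex.I / ((η : ℂ) * (ω : ℂ))
        + ((A * Real.Gamma (1 + α) * (2 * Real.sin (Real.pi * α) / Real.pi) : ℝ) : ℂ)
          * ∑ ℓ : Fin L, ((μ ℓ * θ ℓ ^ (1 - 2 * α) : ℝ) : ℂ)
              / (((θ ℓ ^ 2 : ℝ) : ℂ) + Complex.I * (ω : ℂ)))
    (hc : ∀ ω : ℝ, 0 < ω →
      c ω = Real.sqrt (2 / (ρ * (‖N ω‖ + (N ω).re)))) :
    Tendsto c (nhdsWithin 0 (Set.Ioi 0)) (nhds 0) ∧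
    Tendsto c atTop (nhds (1 / Real.sqrt (ρ * Ju))) :=
  stmt_16_general ρ Ju η A α hρ hJ hη L θ μ hθ N c hN hc
end
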